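/- Let M be a finite von Neumann algebra with faithful normal trace τ, N ⊆ M a von Neumann subalgebra with τ-preserving conditional expectation E_N, and φ : M → M a normal completely positive N-bimodular map with φ(1) ≤ 1 − ε for some ε > 0 and τ∘φ ≤ τ. Put h = φ(1) and k = dτ∘φ/dτ. Then there exist positive operators a, b ∈ N′ ∩ M such that 1 − h = a·E_N(b) and 1 − k = E_N(a)·b. -/

import Mathlib

/- Common framework: a finite von Neumann algebra `M` on a Hilbert space `H` with a faithful
normal trace, normal completely positive maps, bimodular maps, and the `2`-norm. -/

open scoped ComplexOrder InnerProductSpace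
open Filter Topology

noncomputable section

universe u

variable (H : Type u) [NormedAddCommGroup H] [InnerProductSpace ℂ H] [CompleteSpace H]

/-- The `2`-norm `‖x‖₂ = τ(x*x)^{1/2}` associated to a trace functional `τ`. -/
def twoNorm (τ : (H →L[ℂ] H) →ₗ[ℂ] ℂ) (x : H →L[ℂ] H) : ℝ :=
  Real.sqrt (τ (star x * x)).re

/-- A linear functional on `B(H)` is normal (relative to the von Neumann algebra `M`) if it is
continuous for the weak operator topology on bounded balls of `M`. -/
def IsNormalFunctional (M : VonNeumannAlgebra H) (τ : (H →L[ℂ] H) →ₗ[ℂ] ℂ) : Prop :=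
  ∀ r : ℝ, ContinuousOn
    (fun T : H →WOT[ℂ] H => τ (ContinuousLinearMapWOT.toCLM T))
    (ContinuousLinearMapWOT.ofCLM '' (Metric.closedBall 0 r ∩ (M : Set (H →L[ℂ] H))))

/-- A faithful normal tracial state on a von Neumann algebra `M ⊆ B(H)`. -/
structure FaithfulNormalTrace (M : VonNeumannAlgebra H) where
  τ : (H →L[ℂ] H) →ₗ[ℂ] ℂ
  pos : ∀ x ∈ M, 0 ≤ τ (star x * x)
  faithful : ∀ x ∈ M, τ (star x * x) = 0 → x = 0
  tracial : ∀ x ∈ M, ∀ y ∈ M, τ (x * y) = τ (y * x)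
  unital : τ 1 = 1
  normal : IsNormalFunctional H M τ

/-- A linear map `φ : B(H) → B(H)` is normal (as a map of the von Neumann algebra `M`) if it is
continuous for the weak operator topology on bounded balls of `M`. -/
def IsNormalMap (M : VonNeumannAlgebra H) (φ : (H →L[ℂ] H) →ₗ[ℂ] (H →L[ℂ] H)) : Prop :=
  ∀ r : ℝ, ContinuousOn
    (fun T : H →WOT[ℂ] H =>
      ContinuousLinearMapWOT.ofCLM (φ (ContinuousLinearMapWOT.toCLM T)))
    (ContinuousLinearMapWOT.ofCLM '' (Metric.closedBall 0 r ∩ (M : Set (H →L[ℂ] H))))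

/-- Complete positivity of `φ` on `M`: for all `x₁, …, xₙ ∈ M` and `ξ₁, …, ξₙ ∈ H`,
`∑_{i,j} ⟨ξᵢ, φ(xᵢ* xⱼ) ξⱼ⟩ ≥ 0`. -/
def IsCompletelyPositive (M : VonNeumannAlgebra H)
    (φ : (H →L[ℂ] H) →ₗ[ℂ] (H →L[ℂ] H)) : Prop :=
  ∀ (n : ℕ) (x : Fin n → (H →L[ℂ] H)) (ξ : Fin n → H), (∀ i, x i ∈ M) →
    0 ≤ ∑ i, ∑ j, ⟪ξ i, φ (star (x i) * x j) (ξ j)⟫_ℂ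

/-- `φ` is a normal completely positive map from `M` to `M`. -/
def IsNormalCP (M : VonNeumannAlgebra H) (φ : (H →L[ℂ] H) →ₗ[ℂ] (H →L[ℂ] H)) : Prop :=
  (∀ x ∈ M, φ x ∈ M) ∧ IsNormalMap H M φ ∧ IsCompletelyPositive H M φ

/-- `N`-bimodularity of a map `φ : M → M`: `φ(axb) = aφ(x)b` for `a, b ∈ N`, `x ∈ M`. -/
def IsBimodular (M N : VonNeumannAlgebra H) (φ : (H →L[ℂ] H) →ₗ[ℂ] (H →L[ℂ] H)) : Prop :=
  ∀ a ∈ N, ∀ b ∈ N, ∀ x ∈ M, φ (a * x * b) = a * φ x * b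

/-!
Bimodularity puts `h = φ(1)` in `N′`, and the chain
`τ(x y k) = τ(φ(x y)) = τ(φ(x) y) = τ(y φ(x)) = τ(φ(y x)) = τ(y x k)` together with faithfulness
of `τ` puts `k` in `N′` as well. For `y ∈ N` we have `τ(y h) = τ(φ(y)) = τ(y k)`, so
`E_N(h) = E_N(k)`, and `u = E_N(1 - h) = E_N(1 - k)` is central in `N` with `u ≥ ε`.
Testing `τ ∘ φ ≤ τ` against the negative part of `1 - k` shows `k ≤ 1`. Then `a = 1 - h` and
`b = u⁻¹ (1 - k)` work: `b ≥ 0` because `u⁻¹ ∈ N` commutes with `1 - k`, `E_N(b) = u⁻¹ u = 1`,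
and `E_N(a) b = u u⁻¹ (1 - k) = 1 - k`.
-/

theorem Commute.ringInverse_right {M₀ : Type*} [MonoidWithZero M₀] {a b : M₀}
    (h : Commute b a) : Commute b (Ring.inverse a) := by
  by_cases ha : IsUnit a
  · lift a to M₀ˣ using ha
    rw [Ring.inverse_unit]
    exact h.units_inv_right
  · rw [Ring.inverse_non_unit a ha]
    exact Commute.zero_right b

section

variable {H}

namespace VonNeumannAlgebra

variable (M : VonNeumannAlgebra H)

theorem mem_of_forall_commute {x : H →L[ℂ] H}
    (hx : ∀ y ∈ M.commutant, Commute y x) : x ∈ M := by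
  rw [← M.commutant_commutant, mem_commutant_iff]
  exact hx

theorem cfcₙ_mem {a : H →L[ℂ] H} (ha : a ∈ M) (f : ℝ → ℝ) : cfcₙ f a ∈ M :=
  M.mem_of_forall_commute fun y hy =>
    (Commute.cfcₙ_real (mem_commutant_iff.mp hy a ha : Commute a y) f).symm

theorem ringInverse_mem {a : H →L[ℂ] H} (ha : a ∈ M) : Ring.inverse a ∈ M :=
  M.mem_of_forall_commute fun _ hy =>
    Commute.ringInverse_right (mem_commutant_iff.mp hy a ha).symm

end VonNeumannAlgebra

namespace FaithfulNormalTrace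

variable {M : VonNeumannAlgebra H} (tr : FaithfulNormalTrace H M)

theorem eq_of_forall_τ_mul_eq {u v : H →L[ℂ] H} (hu : u ∈ M) (hv : v ∈ M)
    (huv : ∀ x ∈ M, tr.τ (x * u) = tr.τ (x * v)) : u = v := by
  rw [← sub_eq_zero]
  apply tr.faithful _ (sub_mem hu hv)
  rw [mul_sub, map_sub, huv _ (star_mem (sub_mem hu hv)), sub_self]

theorem nonneg_of_forall_τ_mul_nonneg {d : H →L[ℂ] H} (hd : d ∈ M) (hsa : IsSelfAdjoint d)
    (hτ : ∀ x ∈ M, 0 ≤ x → 0 ≤ tr.τ (x * d)) : 0 ≤ d := by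
  have hnM : d⁻ ∈ M := M.cfcₙ_mem hd _
  have hn_sa : IsSelfAdjoint d⁻ := .of_nonneg (CFC.negPart_nonneg d)
  have hnd : d⁻ * d = -(star d⁻ * d⁻) := by
    nth_rw 2 [← CFC.posPart_sub_negPart d hsa]
    rw [mul_sub, CFC.negPart_mul_posPart, zero_sub, hn_sa.star_eq]
  have hzero : tr.τ (star d⁻ * d⁻) = 0 := by
    refine le_antisymm ?_ (tr.pos _ hnM)
    simpa [hnd] using hτ _ hnM (CFC.negPart_nonneg d)
  rw [← CFC.negPart_eq_zero_iff d hsa]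
  exact tr.faithful _ hnM hzero

theorem le_one_of_τ_map_le {φ : (H →L[ℂ] H) →ₗ[ℂ] (H →L[ℂ] H)}
    (hsub : ∀ x ∈ M, x.IsPositive → tr.τ (φ x) ≤ tr.τ x) {k : H →L[ℂ] H} (hkM : k ∈ M)
    (hk : IsSelfAdjoint k) (hkRN : ∀ x ∈ M, tr.τ (φ x) = tr.τ (x * k)) : k ≤ 1 := by
  rw [← sub_nonneg]
  refine tr.nonneg_of_forall_τ_mul_nonneg (sub_mem (one_mem M) hkM)
    ((IsSelfAdjoint.one _).sub hk) fun x hx hx0 => ?_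
  rw [mul_sub, mul_one, map_sub, ← hkRN x hx, sub_nonneg]
  exact hsub x hx ((ContinuousLinearMap.nonneg_iff_isPositive x).mp hx0)

end FaithfulNormalTrace

section ConditionalExpectation

variable {M N : VonNeumannAlgebra H} {EN : (H →L[ℂ] H) →ₗ[ℂ] (H →L[ℂ] H)}

theorem condExp_mul_of_mem_left
    (hEN3 : ∀ a ∈ N, ∀ b ∈ N, ∀ x ∈ M, EN (a * x * b) = a * EN x * b)
    {x y : H →L[ℂ] H} (hy : y ∈ N) (hx : x ∈ M) : EN (y * x) = y * EN x := by
  simpa using hEN3 y hy 1 (one_mem N) x hx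

theorem condExp_mul_of_mem_right
    (hEN3 : ∀ a ∈ N, ∀ b ∈ N, ∀ x ∈ M, EN (a * x * b) = a * EN x * b)
    {x y : H →L[ℂ] H} (hy : y ∈ N) (hx : x ∈ M) : EN (x * y) = EN x * y := by
  simpa using hEN3 1 (one_mem N) y hy x hx

theorem condExp_mem_commutant
    (hEN3 : ∀ a ∈ N, ∀ b ∈ N, ∀ x ∈ M, EN (a * x * b) = a * EN x * b)
    {x : H →L[ℂ] H} (hxM : x ∈ M) (hx : x ∈ N.commutant) : EN x ∈ N.commutant := by
  rw [VonNeumannAlgebra.mem_commutant_iff] at hx ⊢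
  intro y hy
  rw [← condExp_mul_of_mem_left hEN3 hy hxM, ← condExp_mul_of_mem_right hEN3 hy hxM, hx y hy]

theorem condExp_mono (hEN5 : ∀ x ∈ M, x.IsPositive → (EN x).IsPositive)
    {x y : H →L[ℂ] H} (hx : x ∈ M) (hy : y ∈ M) (hxy : x ≤ y) : EN x ≤ EN y := by
  rw [← sub_nonneg, ← map_sub, ContinuousLinearMap.nonneg_iff_isPositive]
  exact hEN5 _ (sub_mem hy hx)
    ((ContinuousLinearMap.nonneg_iff_isPositive _).mp (sub_nonneg.mpr hxy))

theorem isStrictlyPositive_condExp (hEN2 : ∀ x ∈ N, EN x = x)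
    (hEN5 : ∀ x ∈ M, x.IsPositive → (EN x).IsPositive) (hNM : (N : Set (H →L[ℂ] H)) ⊆ M)
    {x : H →L[ℂ] H} (hx : x ∈ M) {ε : ℝ} (hε : 0 < ε) (hεx : algebraMap ℝ _ ε ≤ x) :
    IsStrictlyPositive (EN x) := by
  have hεN : algebraMap ℝ (H →L[ℂ] H) ε ∈ N := by
    rw [Algebra.algebraMap_eq_smul_one, ← Complex.coe_smul]
    exact N.toStarSubalgebra.smul_mem (one_mem N) _
  refine (isStrictlyPositive_algebraMap hε).of_le ?_
  simpa only [hEN2 _ hεN] using condExp_mono hEN5 (hNM hεN) hx hεx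

theorem FaithfulNormalTrace.τ_mul_condExp (tr : FaithfulNormalTrace H M)
    (hNM : (N : Set (H →L[ℂ] H)) ⊆ M) (hEN1 : ∀ x ∈ M, EN x ∈ N)
    (hEN3 : ∀ a ∈ N, ∀ b ∈ N, ∀ x ∈ M, EN (a * x * b) = a * EN x * b)
    (hEN4 : ∀ x ∈ M, tr.τ (EN x) = tr.τ x) {x d : H →L[ℂ] H} (hx : x ∈ M) (hd : d ∈ M) :
    tr.τ (x * EN d) = tr.τ (EN x * d) := by
  rw [← hEN4 _ (mul_mem hx (hNM (hEN1 d hd))), condExp_mul_of_mem_right hEN3 (hEN1 d hd) hx,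
    ← condExp_mul_of_mem_left hEN3 (hEN1 x hx) hd, hEN4 _ (mul_mem (hNM (hEN1 x hx)) hd)]

theorem FaithfulNormalTrace.condExp_eq_of_τ_mul_eq (tr : FaithfulNormalTrace H M)
    (hNM : (N : Set (H →L[ℂ] H)) ⊆ M) (hEN1 : ∀ x ∈ M, EN x ∈ N)
    (hEN3 : ∀ a ∈ N, ∀ b ∈ N, ∀ x ∈ M, EN (a * x * b) = a * EN x * b)
    (hEN4 : ∀ x ∈ M, tr.τ (EN x) = tr.τ x) {u v : H →L[ℂ] H} (hu : u ∈ M) (hv : v ∈ M)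
    (huv : ∀ y ∈ N, tr.τ (y * u) = tr.τ (y * v)) : EN u = EN v := by
  refine tr.eq_of_forall_τ_mul_eq (hNM (hEN1 u hu)) (hNM (hEN1 v hv)) fun x hx => ?_
  rw [tr.τ_mul_condExp hNM hEN1 hEN3 hEN4 hx hu, tr.τ_mul_condExp hNM hEN1 hEN3 hEN4 hx hv]
  exact huv _ (hEN1 x hx)

theorem exists_factorization_of_condExp_eq (hNM : (N : Set (H →L[ℂ] H)) ⊆ M)
    (hEN1 : ∀ x ∈ M, EN x ∈ N)
    (hEN3 : ∀ a ∈ N, ∀ b ∈ N, ∀ x ∈ M, EN (a * x * b) = a * EN x * b)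
    {a d : H →L[ℂ] H} (haM : a ∈ M) (ha : a ∈ N.commutant) (hdM : d ∈ M)
    (hd : d ∈ N.commutant) (hd0 : 0 ≤ d) (hEN : EN d = EN a)
    (hu : IsStrictlyPositive (EN a)) :
    ∃ b, 0 ≤ b ∧ b ∈ M ∧ b ∈ N.commutant ∧ a = a * EN b ∧ d = EN a * b := by
  set u := EN a
  have hvN : Ring.inverse u ∈ N := N.ringInverse_mem (hEN1 a haM)
  have hv_comm : Ring.inverse u ∈ N.commutant :=
    N.commutant.ringInverse_mem (condExp_mem_commutant hEN3 haM ha)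
  refine ⟨Ring.inverse u * d, ?_, mul_mem (hNM hvN) hdM, mul_mem hv_comm hd, ?_, ?_⟩
  · exact Commute.mul_nonneg hu.ringInverse.nonneg hd0
      (VonNeumannAlgebra.mem_commutant_iff.mp hd _ hvN)
  · rw [condExp_mul_of_mem_left hEN3 hvN hdM, hEN, Ring.inverse_mul_cancel u hu.isUnit, mul_one]
  · rw [← mul_assoc, Ring.mul_inverse_cancel u hu.isUnit, one_mul]

end ConditionalExpectation

section Bimodular

variable {M N : VonNeumannAlgebra H} {φ : (H →L[ℂ] H) →ₗ[ℂ] (H →L[ℂ] H)}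

theorem IsBimodular.map_mul_of_mem_left (hφ : IsBimodular H M N φ) {x y : H →L[ℂ] H}
    (hy : y ∈ N) (hx : x ∈ M) : φ (y * x) = y * φ x := by
  simpa using hφ y hy 1 (one_mem N) x hx

theorem IsBimodular.map_mul_of_mem_right (hφ : IsBimodular H M N φ) {x y : H →L[ℂ] H}
    (hy : y ∈ N) (hx : x ∈ M) : φ (x * y) = φ x * y := by
  simpa using hφ 1 (one_mem N) y hy x hx

theorem IsBimodular.map_one_mem_commutant (hφ : IsBimodular H M N φ) :
    φ 1 ∈ N.commutant := by
  rw [VonNeumannAlgebra.mem_commutant_iff]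
  intro y hy
  calc y * φ 1 = φ (y * 1) := (hφ.map_mul_of_mem_left hy (one_mem M)).symm
    _ = φ (1 * y) := by rw [mul_one, one_mul]
    _ = φ 1 * y := hφ.map_mul_of_mem_right hy (one_mem M)

theorem FaithfulNormalTrace.τ_mul_map_one (tr : FaithfulNormalTrace H M)
    (hNM : (N : Set (H →L[ℂ] H)) ⊆ M) (hφ : IsBimodular H M N φ) {k : H →L[ℂ] H}
    (hkRN : ∀ x ∈ M, tr.τ (φ x) = tr.τ (x * k)) {y : H →L[ℂ] H} (hy : y ∈ N) :
    tr.τ (y * φ 1) = tr.τ (y * k) := by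
  rw [← hφ.map_mul_of_mem_left hy (one_mem M), mul_one, hkRN y (hNM hy)]

theorem FaithfulNormalTrace.mem_commutant_of_τ_map_eq (tr : FaithfulNormalTrace H M)
    (hNM : (N : Set (H →L[ℂ] H)) ⊆ M) (hφM : ∀ x ∈ M, φ x ∈ M) (hφ : IsBimodular H M N φ)
    {k : H →L[ℂ] H} (hkM : k ∈ M) (hkRN : ∀ x ∈ M, tr.τ (φ x) = tr.τ (x * k)) :
    k ∈ N.commutant := by
  rw [VonNeumannAlgebra.mem_commutant_iff]
  intro y hy
  have hyM := hNM hy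
  refine tr.eq_of_forall_τ_mul_eq (mul_mem hyM hkM) (mul_mem hkM hyM) fun x hx => ?_
  calc tr.τ (x * (y * k)) = tr.τ (φ (x * y)) := by rw [hkRN _ (mul_mem hx hyM), mul_assoc]
    _ = tr.τ (φ (y * x)) := by
      rw [hφ.map_mul_of_mem_right hy hx, hφ.map_mul_of_mem_left hy hx,
        tr.tracial _ (hφM x hx) _ hyM]
    _ = tr.τ (x * (k * y)) := by
      rw [hkRN _ (mul_mem hyM hx), mul_assoc, tr.tracial _ hyM _ (mul_mem hx hkM), mul_assoc]

end Bimodular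

end

theorem equation_lemma
    (M N : VonNeumannAlgebra H) (hNM : (N : Set (H →L[ℂ] H)) ⊆ (M : Set (H →L[ℂ] H)))
    (tr : FaithfulNormalTrace H M)
    -- the `τ`-preserving conditional expectation `E_N : M → N`
    (EN : (H →L[ℂ] H) →ₗ[ℂ] (H →L[ℂ] H))
    (hEN1 : ∀ x ∈ M, EN x ∈ N)
    (hEN2 : ∀ x ∈ N, EN x = x)
    (hEN3 : ∀ a ∈ N, ∀ b ∈ N, ∀ x ∈ M, EN (a * x * b) = a * EN x * b)
    (hEN4 : ∀ x ∈ M, tr.τ (EN x) = tr.τ x)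
    (hEN5 : ∀ x ∈ M, x.IsPositive → (EN x).IsPositive)
    (φ : (H →L[ℂ] H) →ₗ[ℂ] (H →L[ℂ] H))
    (hφ : IsNormalCP H M φ) (hbi : IsBimodular H M N φ)
    -- `φ(1) ≤ 1 − ε`
    (ε : ℝ) (hε : 0 < ε) (hφ1 : ((1 - ε) • (1 : H →L[ℂ] H) - φ 1).IsPositive)
    (hsub : ∀ x ∈ M, x.IsPositive → tr.τ (φ x) ≤ tr.τ x)
    -- `h = φ(1)` and the Radon–Nikodym derivative `k = dτ∘φ/dτ`
    (h k : H →L[ℂ] H) (hh : h = φ 1)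
    (hkM : k ∈ M) (hkpos : k.IsPositive)
    (hkRN : ∀ x ∈ M, tr.τ (φ x) = tr.τ (x * k)) :
    ∃ a b : H →L[ℂ] H,
      a.IsPositive ∧ b.IsPositive ∧
      (a ∈ M ∧ ∀ y ∈ N, Commute y a) ∧
      (b ∈ M ∧ ∀ y ∈ N, Commute y b) ∧
      1 - h = a * EN b ∧ 1 - k = EN a * b := by
  subst hh
  have hhM : φ 1 ∈ M := hφ.1 1 (one_mem M)
  have haM : 1 - φ 1 ∈ M := sub_mem (one_mem M) hhM
  have ha_comm : 1 - φ 1 ∈ N.commutant := sub_mem (one_mem _) hbi.map_one_mem_commutant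
  have hεa : algebraMap ℝ (H →L[ℂ] H) ε ≤ 1 - φ 1 := by
    rw [← sub_nonneg, ContinuousLinearMap.nonneg_iff_isPositive]
    convert hφ1 using 1
    rw [Algebra.algebraMap_eq_smul_one, sub_smul, one_smul]
    abel
  have hENk : EN (1 - k) = EN (1 - φ 1) := by
    rw [map_sub, map_sub, tr.condExp_eq_of_τ_mul_eq hNM hEN1 hEN3 hEN4 hkM hhM
      fun y hy => (tr.τ_mul_map_one hNM hbi hkRN hy).symm]
  obtain ⟨b, hb0, hbM, hb_comm, hfac_h, hfac_k⟩ :=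
    exists_factorization_of_condExp_eq hNM hEN1 hEN3 haM ha_comm (sub_mem (one_mem M) hkM)
      (sub_mem (one_mem _) (tr.mem_commutant_of_τ_map_eq hNM hφ.1 hbi hkM hkRN))
      (sub_nonneg.mpr (tr.le_one_of_τ_map_le hsub hkM hkpos.isSelfAdjoint hkRN)) hENk
      (isStrictlyPositive_condExp hEN2 hEN5 hNM haM hε hεa)
  refine ⟨1 - φ 1, b, ?_, (ContinuousLinearMap.nonneg_iff_isPositive b).mp hb0,
    ⟨haM, VonNeumannAlgebra.mem_commutant_iff.mp ha_comm⟩,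
    ⟨hbM, VonNeumannAlgebra.mem_commutant_iff.mp hb_comm⟩, hfac_h, hfac_k⟩
  exact (ContinuousLinearMap.nonneg_iff_isPositive _).mp
    ((isStrictlyPositive_algebraMap hε).nonneg.trans hεa)
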